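/- Let N ≥ 8 be an integer divisible by 4. For every integer s with 1 ≤ s ≤ N/4 − 1, one has N²/2 + ∑_{j=1}^{N/4−1} (N − 4j)² cos(4πjs/N) = 2N/sin²(2πs/N). -/

import Mathlib

/-!
Write `N = 4M` and `t = 2πs/N`, so that the cosines are `cos (2jt)` and `sin (2Mt) = sin (πs) = 0`.
The summand `4 sin³ t (M - j)² cos (2jt)` is the forward difference in `j` of an explicit function
(a quadratic in `j` times `sin ((2j-1)t)` plus a linear one times `cos ((2j-1)t)`), so the sum
telescopes to `4 sin³ t ∑_{j<M} (M - j)² cos (2jt) = 2M² sin³ t + 2M sin t - cos t sin (2Mt)`.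
Since `sin (2Mt) = 0`, the last term disappears, and dividing by `sin³ t` gives the identity.
-/

open Real Finset

noncomputable def sqCosPrimitive (a t x : ℝ) : ℝ :=
  (2 * sin t ^ 2 * (x - a) * (x - a - 1) - cos t ^ 2) * sin ((2 * x - 1) * t) +
    sin t * cos t * (2 * x - 2 * a - 1) * cos ((2 * x - 1) * t)

theorem sqCosPrimitive_add_one_sub (a t x : ℝ) :
    sqCosPrimitive a t (x + 1) - sqCosPrimitive a t x
      = 4 * sin t ^ 3 * ((a - x) ^ 2 * cos (2 * x * t)) := by
  have hsucc : (2 * (x + 1) - 1) * t = 2 * x * t + t := by ring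
  have hpred : (2 * x - 1) * t = 2 * x * t - t := by ring
  rw [sqCosPrimitive, sqCosPrimitive, hsucc, hpred, sin_add, cos_add, sin_sub, cos_sub]
  ring

theorem four_mul_sin_pow_three_mul_sum_range_sq_mul_cos (M : ℕ) (t : ℝ) :
    4 * sin t ^ 3 * ∑ j ∈ range M, ((M : ℝ) - j) ^ 2 * cos (2 * j * t)
      = 2 * (M : ℝ) ^ 2 * sin t ^ 3 + 2 * M * sin t - cos t * sin (2 * M * t) := by
  have htelescope := sum_range_sub (fun j : ℕ => sqCosPrimitive M t j) M
  simp only [Nat.cast_add, Nat.cast_one, sqCosPrimitive_add_one_sub] at htelescope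
  rw [mul_sum, htelescope, sqCosPrimitive, sqCosPrimitive,
    show (2 * (M : ℝ) - 1) * t = 2 * M * t - t by ring, sin_sub, cos_sub]
  simp only [Nat.cast_zero, mul_zero, zero_sub, neg_mul, one_mul, sin_neg, cos_neg]
  linear_combination (2 * M * sin t - cos t * sin (2 * M * t)) * sin_sq_add_cos_sq t

theorem two_mul_sin_sq_mul_sum_range_sq_mul_cos (M : ℕ) {t : ℝ} (ht : sin t ≠ 0)
    (hMt : sin (2 * M * t) = 0) :
    2 * sin t ^ 2 * ∑ j ∈ range M, ((M : ℝ) - j) ^ 2 * cos (2 * j * t)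
      = (M : ℝ) ^ 2 * sin t ^ 2 + M := by
  refine mul_left_cancel₀ (mul_ne_zero two_ne_zero ht) ?_
  linear_combination four_mul_sin_pow_three_mul_sum_range_sq_mul_cos M t - cos t * hMt

theorem sum_range_eq_add_sum_Icc_one {β : Type*} [AddCommMonoid β] (f : ℕ → β) {n : ℕ}
    (hn : n ≠ 0) : ∑ j ∈ range n, f j = f 0 + ∑ j ∈ Icc 1 (n - 1), f j := by
  rw [Nat.range_eq_Icc_zero_sub_one _ hn, ← add_sum_Ioc_eq_sum_Icc (Nat.zero_le _)]
  rfl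

theorem sum_identity_even_inverse (N : ℕ) (hN4 : 4 ∣ N)
    (s : ℕ) (hs1 : 1 ≤ s) (hs2 : s ≤ N / 4 - 1) :
    (N : ℝ) ^ 2 / 2 + ∑ j ∈ Finset.Icc 1 (N / 4 - 1),
        ((N : ℝ) - 4 * j) ^ 2 * Real.cos (4 * Real.pi * j * s / N)
      = 2 * (N : ℝ) / Real.sin (2 * Real.pi * s / N) ^ 2 := by
  obtain ⟨M, rfl⟩ := hN4
  rw [show 4 * M / 4 - 1 = M - 1 by omega] at hs2 ⊢
  have hs : (0 : ℝ) < s := by exact_mod_cast hs1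
  have hsM : (s : ℝ) + 1 ≤ M := by exact_mod_cast (by omega : s + 1 ≤ M)
  have hM : (0 : ℝ) < M := by linarith
  push_cast
  set t := 2 * π * s / (4 * M) with ht
  have hsin : sin t ≠ 0 := by
    refine (sin_pos_of_pos_of_lt_pi (by positivity) ?_).ne'
    rw [ht, div_lt_iff₀ (by positivity)]
    nlinarith [pi_pos]
  have hMt : sin (2 * M * t) = 0 := by
    rw [show 2 * M * t = s * π by rw [ht]; field_simp; ring]
    exact sin_nat_mul_pi s
  have hsum := two_mul_sin_sq_mul_sum_range_sq_mul_cos M hsin hMt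
  rw [sum_range_eq_add_sum_Icc_one _ (by omega)] at hsum
  simp only [Nat.cast_zero, sub_zero, mul_zero, zero_mul, cos_zero, mul_one] at hsum
  have hterm : ∀ j : ℕ, (4 * (M : ℝ) - 4 * j) ^ 2 * cos (4 * π * j * s / (4 * M))
      = 16 * (((M : ℝ) - j) ^ 2 * cos (2 * j * t)) := fun j => by
    rw [ht]; field_simp; ring_nf
  simp only [hterm, ← mul_sum]
  rw [eq_div_iff (pow_ne_zero 2 hsin)]
  linear_combination 8 * hsum
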